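/- Let E be a real inner product space of dimension n ≥ 4 and let R be an algebraic curvature tensor on E with nonnegative isotropic curvature. Then the Ricci curvature of R is 4-nonnegative: the sum of the four smallest eigenvalues (counted with multiplicity) of the symmetric endomorphism of E associated to the bilinear form Ric is nonnegative. -/

import Mathlib

/-!
In an orthonormal eigenbasis `(uᵢ)` of the Ricci endomorphism, `λᵢ = ∑ⱼ K(i,j)` with
`K(i,j) = R(uᵢ, uⱼ, uᵢ, uⱼ)` and `K(i,i) = 0`. Adding the isotropic curvature inequalities of the
frames `(e₁, e₂, e₃, e₄)` and `(e₁, e₂, e₄, e₃)` cancels `R(e₁, e₂, e₃, e₄)`, so the cross sum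
`K(a,c) + K(a,d) + K(b,c) + K(b,d)` is nonnegative for distinct indices. For `a ≠ b`,
`λ_a + λ_b - K(a,b) - K(b,a) = ∑_{j ∉ {a,b}} (K(a,j) + K(b,j))` is a sum of at least two terms,
any two of which have nonnegative sum, hence it is nonnegative. Applying this to the pairs
`{a,c}, {b,d}, {a,d}, {b,c}` of four distinct indices leaves the cross sums of `{a,b}` against
`{c,d}` and of `{c,d}` against `{a,b}`.
-/

open scoped RealInnerProductSpace
open Finset

theorem OrthonormalBasis.sum_apply_self_eq {E ι ι' M : Type*} [NormedAddCommGroup E]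
    [InnerProductSpace ℝ E] [FiniteDimensional ℝ E] [Fintype ι] [Fintype ι'] [AddCommGroup M]
    [Module ℝ M] (B : E →ₗ[ℝ] E →ₗ[ℝ] M) (b : OrthonormalBasis ι ℝ E)
    (u : OrthonormalBasis ι' ℝ E) :
    ∑ i, B (b i) (b i) = ∑ j, B (u j) (u j) := by
  simpa using congrArg (TensorProduct.lift B)
    ((InnerProductSpace.canonicalCovariantTensor_eq_sum E b).symm.trans
      (InnerProductSpace.canonicalCovariantTensor_eq_sum E u))

theorem LinearMap.IsSymmetric.eigenvalues_eq_inner {E : Type*} [NormedAddCommGroup E]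
    [InnerProductSpace ℝ E] [FiniteDimensional ℝ E] {A : E →ₗ[ℝ] E} (hA : A.IsSymmetric)
    {n : ℕ} (hn : Module.finrank ℝ E = n) (i : Fin n) :
    hA.eigenvalues hn i = ⟪A (hA.eigenvectorBasis hn i), hA.eigenvectorBasis hn i⟫ := by
  rw [hA.apply_eigenvectorBasis, real_inner_smul_left,
    real_inner_self_eq_norm_sq, (hA.eigenvectorBasis hn).orthonormal.1 i]
  simp

theorem Finset.sum_nonneg_of_pairwise_add_nonneg {ι : Type*} [DecidableEq ι] {t : Finset ι}
    {g : ι → ℝ} (ht : 1 < #t) (hg : ∀ j ∈ t, ∀ k ∈ t, j ≠ k → 0 ≤ g j + g k) :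
    0 ≤ ∑ j ∈ t, g j := by
  obtain ⟨j₀, hj₀, hmin⟩ := t.exists_min_image g (card_pos.mp (by omega))
  by_cases hpos : 0 ≤ g j₀
  · exact sum_nonneg fun j hj => hpos.trans (hmin j hj)
  have hrest : ∀ k ∈ t.erase j₀, 0 ≤ g k := fun k hk =>
    by linarith [hg j₀ hj₀ k (mem_of_mem_erase hk) (ne_of_mem_erase hk).symm]
  obtain ⟨k, hk⟩ : (t.erase j₀).Nonempty := card_pos.mp (by rw [card_erase_of_mem hj₀]; omega)
  calc 0 ≤ g j₀ + g k := hg j₀ hj₀ k (mem_of_mem_erase hk) (ne_of_mem_erase hk).symm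
    _ ≤ g j₀ + ∑ j ∈ t.erase j₀, g j := by gcongr; exact single_le_sum hrest hk
    _ = ∑ j ∈ t, g j := add_sum_erase t g hj₀

/-- For `K i j` the sectional curvature of the plane `⟨e_i, e_j⟩` of an orthonormal frame: the
four planes mixing `{e_a, e_b}` with `{e_c, e_d}` have nonnegative total curvature. -/
def CrossSumsNonneg {ι : Type*} (K : ι → ι → ℝ) : Prop :=
  ∀ a b c d, a ≠ b → a ≠ c → a ≠ d → b ≠ c → b ≠ d → c ≠ d →
    0 ≤ K a c + K a d + K b c + K b d

namespace CrossSumsNonneg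

variable {ι : Type*} [Fintype ι] [DecidableEq ι] {K : ι → ι → ℝ}

theorem add_le_sum_add_sum (hK : CrossSumsNonneg K) (hdiag : ∀ a, K a a = 0)
    (hι : 4 ≤ Fintype.card ι) {a b : ι} (hab : a ≠ b) :
    K b a + K a b ≤ ∑ j, K a j + ∑ j, K b j := by
  have hrest : 0 ≤ ∑ j ∈ {a, b}ᶜ, (K a j + K b j) := by
    refine sum_nonneg_of_pairwise_add_nonneg ?_ fun j hj k hk hjk => ?_
    · rw [card_compl, card_pair hab]; omega
    · simp only [mem_compl, mem_insert, mem_singleton, not_or] at hj hk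
      linarith [hK a b j k hab (Ne.symm hj.1) (Ne.symm hk.1) (Ne.symm hj.2) (Ne.symm hk.2) hjk]
  rw [← sum_add_distrib, ← sum_add_sum_compl {a, b}, sum_pair hab, hdiag a, hdiag b]
  linarith

theorem sum_sum_nonneg_of_card_eq_four (hK : CrossSumsNonneg K) (hdiag : ∀ a, K a a = 0)
    {s : Finset ι} (hs : #s = 4) :
    0 ≤ ∑ i ∈ s, ∑ j, K i j := by
  have hι : 4 ≤ Fintype.card ι := hs ▸ card_le_univ s
  obtain ⟨a, t, hat, rfl, ht⟩ := card_eq_succ.mp hs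
  obtain ⟨b, c, d, hbc, hbd, hcd, rfl⟩ := card_eq_three.mp ht
  simp only [mem_insert, mem_singleton, not_or] at hat
  obtain ⟨hab, hac, had⟩ := hat
  rw [sum_insert (by simp [hab, hac, had]), sum_insert (by simp [hbc, hbd]), sum_pair hcd]
  have hac' := hK.add_le_sum_add_sum hdiag hι hac
  have hbd' := hK.add_le_sum_add_sum hdiag hι hbd
  have had' := hK.add_le_sum_add_sum hdiag hι had
  have hbc' := hK.add_le_sum_add_sum hdiag hι hbc
  linarith [hK a b c d hab hac had hbc hbd hcd,
    hK c d a b hcd (Ne.symm hac) (Ne.symm hbc) (Ne.symm had) (Ne.symm hbd) hab]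

end CrossSumsNonneg

section Curvature

variable {E : Type*} [NormedAddCommGroup E] [InnerProductSpace ℝ E]

def NonnegIsotropicCurvature (R : E →ₗ[ℝ] E →ₗ[ℝ] E →ₗ[ℝ] E →ₗ[ℝ] ℝ) : Prop :=
  ∀ e : Fin 4 → E, Orthonormal ℝ e →
    R (e 0) (e 2) (e 0) (e 2) + R (e 0) (e 3) (e 0) (e 3) +
      R (e 1) (e 2) (e 1) (e 2) + R (e 1) (e 3) (e 1) (e 3) -
      2 * R (e 0) (e 1) (e 2) (e 3) ≥ 0

theorem NonnegIsotropicCurvature.crossSumsNonneg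
    {R : E →ₗ[ℝ] E →ₗ[ℝ] E →ₗ[ℝ] E →ₗ[ℝ] ℝ} (hR : NonnegIsotropicCurvature R)
    (hanti : ∀ x y z w, R x y z w = - R x y w z) {ι : Type*} {v : ι → E}
    (hv : Orthonormal ℝ v) :
    CrossSumsNonneg fun i j => R (v i) (v j) (v i) (v j) := by
  intro a b c d hab hac had hbc hbd hcd
  have hinj : Function.Injective ![a, b, c, d] := by
    intro i j
    fin_cases i <;> fin_cases j <;> simp [*, Ne.symm]
  have he : Orthonormal ℝ (v ∘ ![a, b, c, d]) := hv.comp _ hinj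
  have h := hR _ he
  have hswap := hR _ (he.comp _ (Equiv.swap (2 : Fin 4) 3).injective)
  simp only [Function.comp_apply, Matrix.cons_val, Equiv.swap_apply_left, Equiv.swap_apply_right,
    Equiv.swap_apply_of_ne_of_ne, ne_eq, Fin.reduceEq, not_false_eq_true] at h hswap
  linarith [hanti (v a) (v b) (v c) (v d)]

end Curvature

theorem stmt3_general {E : Type*} [NormedAddCommGroup E] [InnerProductSpace ℝ E]
    [FiniteDimensional ℝ E] {n : ℕ} (hn : Module.finrank ℝ E = n)
    (R : E →ₗ[ℝ] E →ₗ[ℝ] E →ₗ[ℝ] E →ₗ[ℝ] ℝ)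
    (hanti₁ : ∀ x y z w, R x y z w = - R y x z w)
    (hanti₂ : ∀ x y z w, R x y z w = - R x y w z)
    (hNNIC : ∀ e : Fin 4 → E, Orthonormal ℝ e →
      R (e 0) (e 2) (e 0) (e 2) + R (e 0) (e 3) (e 0) (e 3) +
        R (e 1) (e 2) (e 1) (e 2) + R (e 1) (e 3) (e 1) (e 3) -
        2 * R (e 0) (e 1) (e 2) (e 3) ≥ 0)
    (b : OrthonormalBasis (Fin n) ℝ E)
    (A : E →ₗ[ℝ] E) (hAsym : A.IsSymmetric)
    (hA : ∀ x y, ⟪A x, y⟫ = ∑ i, R x (b i) y (b i)) :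
    ∀ s : Finset (Fin n), s.card = 4 → 0 ≤ ∑ i ∈ s, hAsym.eigenvalues hn i := by
  intro s hs
  set u := hAsym.eigenvectorBasis hn
  have heig : ∀ i, hAsym.eigenvalues hn i = ∑ j, R (u i) (u j) (u i) (u j) := fun i => by
    rw [hAsym.eigenvalues_eq_inner, hA]
    exact b.sum_apply_self_eq ((R (u i)).flip (u i)) u
  rw [sum_congr rfl fun i _ => heig i]
  refine CrossSumsNonneg.sum_sum_nonneg_of_card_eq_four ?_ (fun i => ?_) hs
  · exact NonnegIsotropicCurvature.crossSumsNonneg hNNIC hanti₂ u.orthonormal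
  · linarith [hanti₁ (u i) (u i) (u i) (u i)]

/-- If an algebraic curvature tensor `R` on a real inner product space of
dimension `n ≥ 4` has nonnegative isotropic curvature, then the symmetric endomorphism `A`
associated to its Ricci curvature is 4-nonnegative: the sum of any four of its eigenvalues
(counted with multiplicity) — in particular the four smallest — is nonnegative. -/
theorem stmt3 {E : Type*} [NormedAddCommGroup E] [InnerProductSpace ℝ E]
    [FiniteDimensional ℝ E] {n : ℕ} (hn : Module.finrank ℝ E = n) (hdim : 4 ≤ n)
    (R : E →ₗ[ℝ] E →ₗ[ℝ] E →ₗ[ℝ] E →ₗ[ℝ] ℝ)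
    (hanti₁ : ∀ x y z w, R x y z w = - R y x z w)
    (hanti₂ : ∀ x y z w, R x y z w = - R x y w z)
    (hpair : ∀ x y z w, R x y z w = R z w x y)
    (hbianchi : ∀ x y z w, R x y z w + R y z x w + R z x y w = 0)
    (hNNIC : ∀ e : Fin 4 → E, Orthonormal ℝ e →
      R (e 0) (e 2) (e 0) (e 2) + R (e 0) (e 3) (e 0) (e 3) +
        R (e 1) (e 2) (e 1) (e 2) + R (e 1) (e 3) (e 1) (e 3) -
        2 * R (e 0) (e 1) (e 2) (e 3) ≥ 0)
    (b : OrthonormalBasis (Fin n) ℝ E)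
    (A : E →ₗ[ℝ] E) (hAsym : A.IsSymmetric)
    (hA : ∀ x y, ⟪A x, y⟫ = ∑ i, R x (b i) y (b i)) :
    ∀ s : Finset (Fin n), s.card = 4 → 0 ≤ ∑ i ∈ s, hAsym.eigenvalues hn i :=
  stmt3_general hn R hanti₁ hanti₂ hNNIC b A hAsym hA
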